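/- Conflict generalisation for safety properties (Proposition of Section 3): let 𝔓 be a family of MCs over finite state type S with parameter type K and initial state s0, let G ⊆ S, λ ∈ ℝ, and let C ⊆ S with s0 ∈ C be a critical set for the realisation r and the safety property P_{≤λ}(◇G), i.e., Prob_{(P_r)_C}(s0,G) > λ. Then for every realisation r' : K → S with r' k = r k for every parameter k that occurs at some state of C, the set C is also a critical set for D_{r'}, i.e., Prob_{(P_{r'})_C}(s0,G) > λ, and D_{r'} violates the safety property: Prob_{P_{r'}}(s0,G) > λ. -/

import Mathlib

open scoped Classical BigOperators

/-- `n`-step reachability probability `Pr_P^n(s, G)`. -/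
noncomputable def Pr {S : Type*} [Fintype S] (P : S → S → ℝ) : ℕ → S → Set S → ℝ
  | 0, s, G => if s ∈ G then 1 else 0
  | n + 1, s, G => if s ∈ G then 1 else ∑ t, P s t * Pr P n t G

/-- Reachability probability `Prob_P(s, G) = ⨆ n, Pr_P^n(s, G)`. -/
noncomputable def Prob {S : Type*} [Fintype S] (P : S → S → ℝ) (s : S) (G : Set S) : ℝ :=
  ⨆ n : ℕ, Pr P n s G

/-- `C`-restriction of `P`: states outside `C` are made absorbing. -/
noncomputable def restrictMC {S : Type*} (C : Set S) (P : S → S → ℝ) (s t : S) : ℝ :=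
  if s ∈ C then P s t else (if t = s then 1 else 0)

/-- `n`-step probability of reaching `B` while avoiding `G`. -/
noncomputable def APr {S : Type*} [Fintype S] (P : S → S → ℝ) : ℕ → S → Set S → Set S → ℝ
  | 0, s, B, _ => if s ∈ B then 1 else 0
  | n + 1, s, B, G => if s ∈ B then 1 else if s ∈ G then 0 else ∑ t, P s t * APr P n t B G

/-- `AProb_P(s, B, G) = ⨆ n, APr_P^n(s, B, G)`. -/
noncomputable def AProb {S : Type*} [Fintype S] (P : S → S → ℝ) (s : S) (B G : Set S) : ℝ :=
  ⨆ n : ℕ, APr P n s B G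

/-- `s` has a path to `G` under `P`. -/
def HasPathTo {S : Type*} (P : S → S → ℝ) (s : S) (G : Set S) : Prop :=
  ∃ (m : ℕ) (u : ℕ → S), u 0 = s ∧ (∀ i < m, 0 < P (u i) (u (i + 1))) ∧ u m ∈ G

/-- `B_P(G)`: the set of states with no path to `G` under `P`. -/
def BSet {S : Type*} (P : S → S → ℝ) (G : Set S) : Set S :=
  {s | ¬ HasPathTo P s G}

/-- Transition function `P_r` of the instantiated MC `D_r` of a family `𝔓`. -/
noncomputable def Pinst {S K : Type*} [Fintype K] (𝔓 : S → K → ℝ) (r : K → S) (s t : S) : ℝ :=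
  ∑ k, if r k = t then 𝔓 s k else 0

/-- Parameter `k` occurs at some state of `C`. -/
def OccursIn {S K : Type*} (𝔓 : S → K → ℝ) (C : Set S) (k : K) : Prop :=
  ∃ s ∈ C, 0 < 𝔓 s k

/-- `u` is reachable from `s0` under `P`. -/
def ReachableFrom {S : Type*} (P : S → S → ℝ) (s0 u : S) : Prop :=
  ∃ (m : ℕ) (v : ℕ → S), v 0 = s0 ∧ (∀ i < m, 0 < P (v i) (v (i + 1))) ∧ v m = u

/-! Making the states outside `C` absorbing cannot increase reachability probabilities, and the
`C`-restriction of an instantiated MC only reads the parameters occurring in `C`; so the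
restricted chains of `r` and `r'` coincide, and the reachability probability in the restriction
of `D_{r'}` is a lower bound for the one in `D_{r'}`. -/

section Reachability

variable {S : Type*} [Fintype S] {P : S → S → ℝ}

lemma Pr_nonneg (hP : ∀ s t, 0 ≤ P s t) (n : ℕ) (s : S) (G : Set S) : 0 ≤ Pr P n s G := by
  induction n generalizing s with
  | zero => unfold Pr; split_ifs <;> norm_num
  | succ n ih =>
    unfold Pr
    split_ifs
    · exact zero_le_one
    · exact Finset.sum_nonneg fun t _ => mul_nonneg (hP s t) (ih t)

lemma Pr_le_one (hP : ∀ s t, 0 ≤ P s t) (hP1 : ∀ s, ∑ t, P s t = 1) (n : ℕ) (s : S)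
    (G : Set S) : Pr P n s G ≤ 1 := by
  induction n generalizing s with
  | zero => unfold Pr; split_ifs <;> norm_num
  | succ n ih =>
    unfold Pr
    split_ifs
    · exact le_rfl
    · calc ∑ t, P s t * Pr P n t G ≤ ∑ t, P s t :=
            Finset.sum_le_sum fun t _ => mul_le_of_le_one_right (hP s t) (ih t)
        _ = 1 := hP1 s

lemma Pr_restrictMC_of_notMem (C : Set S) (n : ℕ) {s : S} {G : Set S}
    (hsC : s ∉ C) (hsG : s ∉ G) : Pr (restrictMC C P) n s G = 0 := by
  induction n with
  | zero => simp [Pr, hsG]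
  | succ n ih => simp [Pr, restrictMC, hsC, hsG, ih]

lemma Pr_restrictMC_le (C : Set S) (hP : ∀ s t, 0 ≤ P s t) (n : ℕ) (s : S) (G : Set S) :
    Pr (restrictMC C P) n s G ≤ Pr P n s G := by
  induction n generalizing s with
  | zero => rfl
  | succ n ih =>
    by_cases hsG : s ∈ G
    · simp [Pr, hsG]
    by_cases hsC : s ∈ C
    · simp only [Pr, if_neg hsG, restrictMC, if_pos hsC]
      exact Finset.sum_le_sum fun t _ => mul_le_mul_of_nonneg_left (ih t) (hP s t)
    · rw [Pr_restrictMC_of_notMem C _ hsC hsG]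
      exact Pr_nonneg hP _ s G

lemma Prob_restrictMC_le (C : Set S) (hP : ∀ s t, 0 ≤ P s t) (hP1 : ∀ s, ∑ t, P s t = 1)
    (s : S) (G : Set S) : Prob (restrictMC C P) s G ≤ Prob P s G :=
  ciSup_mono ⟨1, Set.forall_mem_range.2 fun n => Pr_le_one hP hP1 n s G⟩
    fun n => Pr_restrictMC_le C hP n s G

end Reachability

section Family

variable {S K : Type*} [Fintype K] {𝔓 : S → K → ℝ}

lemma Pinst_nonneg (h𝔓0 : ∀ s k, 0 ≤ 𝔓 s k) (r : K → S) (s t : S) : 0 ≤ Pinst 𝔓 r s t :=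
  Finset.sum_nonneg fun k _ => by split_ifs <;> [exact h𝔓0 s k; exact le_rfl]

lemma sum_Pinst [Fintype S] (r : K → S) (s : S) : ∑ t, Pinst 𝔓 r s t = ∑ k, 𝔓 s k := by
  unfold Pinst
  rw [Finset.sum_comm]
  simp

lemma restrictMC_Pinst_congr (h𝔓0 : ∀ s k, 0 ≤ 𝔓 s k) (C : Set S) {r r' : K → S}
    (hagree : ∀ k, OccursIn 𝔓 C k → r' k = r k) :
    restrictMC C (Pinst 𝔓 r') = restrictMC C (Pinst 𝔓 r) := by
  funext s t
  by_cases hsC : s ∈ C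
  · simp only [restrictMC, if_pos hsC, Pinst]
    refine Finset.sum_congr rfl fun k _ => ?_
    rcases (h𝔓0 s k).lt_or_eq with hpos | hzero
    · rw [hagree k ⟨s, hsC, hpos⟩]
    · simp [← hzero]
  · simp only [restrictMC, if_neg hsC]

end Family

theorem stmt_4_general {S K : Type*} [Fintype S] [Fintype K]
    (𝔓 : S → K → ℝ) (h𝔓0 : ∀ s k, 0 ≤ 𝔓 s k) (h𝔓1 : ∀ s, ∑ k, 𝔓 s k = 1)
    (s0 : S) (G : Set S) (lam : ℝ) (C : Set S)
    (r : K → S) (hcrit : Prob (restrictMC C (Pinst 𝔓 r)) s0 G > lam)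
    (r' : K → S) (hagree : ∀ k, OccursIn 𝔓 C k → r' k = r k) :
    Prob (restrictMC C (Pinst 𝔓 r')) s0 G > lam ∧ Prob (Pinst 𝔓 r') s0 G > lam := by
  have hcrit' : Prob (restrictMC C (Pinst 𝔓 r')) s0 G > lam := by
    rwa [restrictMC_Pinst_congr h𝔓0 C hagree]
  have hrow : ∀ s, ∑ t, Pinst 𝔓 r' s t = 1 := fun s => (sum_Pinst r' s).trans (h𝔓1 s)
  exact ⟨hcrit', hcrit'.trans_le <|
    Prob_restrictMC_le C (Pinst_nonneg h𝔓0 r') hrow s0 G⟩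

/-- conflict generalisation for safety properties. -/
theorem stmt_4 {S K : Type*} [Fintype S] [Nonempty S] [Fintype K]
    (𝔓 : S → K → ℝ) (h𝔓0 : ∀ s k, 0 ≤ 𝔓 s k) (h𝔓1 : ∀ s, ∑ k, 𝔓 s k = 1)
    (s0 : S) (G : Set S) (lam : ℝ) (C : Set S) (hs0 : s0 ∈ C)
    (r : K → S) (hcrit : Prob (restrictMC C (Pinst 𝔓 r)) s0 G > lam)
    (r' : K → S) (hagree : ∀ k, OccursIn 𝔓 C k → r' k = r k) :
    Prob (restrictMC C (Pinst 𝔓 r')) s0 G > lam ∧ Prob (Pinst 𝔓 r') s0 G > lam :=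
  stmt_4_general 𝔓 h𝔓0 h𝔓1 s0 G lam C r hcrit r' hagree
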